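/- arXiv:1309.4161 — 3 statements merged into one kernel-verified Lean document; each statement's English description precedes it below -/
import Mathlib

section
/- Suppose the underlying network G is a tree with infection source v ∈ V, let H be the minimal connected subtree of G spanning V_e ∪ {v}, and let the elapsed time be t ∈ 𝒯_v. Then for any node u ∈ H∖{v}, the first infection time t_u of u in any infection path consistent with V_e satisfies d(v,u) ≤ t_u ≤ t − d̄(u, T_u(v;H)). -/
/-!
Infection crosses at most one edge per time slot. Hence, in a tree, if `w` is infected at time `τ`
then every vertex `u` on the path from the source `v` to `w` is infected by time `τ - d(u, w)`;
for `u = v` this gives `d(v, w) ≤ τ`. Every vertex of `H` lies on the path from `v` to some node of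
`V_e ∪ {v}`, and these nodes are infected at time `t`, so all of `H` is infected at time `t`. The lower bound is then the case `u = v` at `w = u`, and the upper bound
follows by applying the first fact to `u` and each vertex of `T_u(v;H)`.
-/

open scoped Classical

namespace SILimited

/-- The possible states of a node in the discrete-time SI model with limited observations:
susceptible, non-susceptible, infected (non-explicit), and explicit. -/
inductive NodeState : Type
  | susceptible : NodeState
  | nonsusceptible : NodeState
  | infected : NodeState
  | explicitN : NodeState
  deriving DecidableEq

/-- A node state counts as infected if it is infected (non-explicit) or explicit. -/
def NodeState.IsInfected : NodeState → Prop
  | .infected => True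
  | .explicitN => True
  | _ => False

variable {V : Type*}

/-- One-time-slot transition probability of a single node `u` with explicit probability `qu`,
infection probability `p`: a susceptible node stays susceptible w.p. `1 - p`, becomes infected
non-explicit w.p. `p * (1 - qu)`, becomes explicit w.p. `p * qu`; infected (resp. explicit)
nodes stay infected (resp. explicit), and non-susceptible nodes remain uninfected w.p. one. -/
def transProb (p qu : ℝ) : NodeState → NodeState → ℝ
  | .susceptible, .susceptible => 1 - p
  | .susceptible, .infected => p * (1 - qu)
  | .susceptible, .explicitN => p * qu
  | .nonsusceptible, .nonsusceptible => 1
  | .nonsusceptible, .susceptible => 1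
  | .infected, .infected => 1
  | .explicitN, .explicitN => 1
  | _, _ => 0

/-- Probability `P_v(X^t)` of an infection path `X` over elapsed time `t` given source `v`:
the product over nodes and time slots of the one-slot transition probabilities, together with
the factor for whether the source is explicit or not. -/
noncomputable def pathProb (p : ℝ) (q : V → ℝ) (v : V) (t : ℕ) (X : V → ℕ → NodeState) : ℝ :=
  (if X v 0 = .explicitN then q v else 1 - q v) *
    ∏ᶠ u : V, ∏ τ ∈ Finset.range t, transProb p (q u) (X u τ) (X u (τ + 1))

/-- `X` is a valid infection path over times `0, 1, …, t` for the SI dynamics on `G`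
with (single) infection source `v`. -/
structure IsInfectionPath (G : SimpleGraph V) (v : V) (t : ℕ) (X : V → ℕ → NodeState) : Prop where
  source_infected : (X v 0).IsInfected
  init_uninfected : ∀ u, u ≠ v → ¬ (X u 0).IsInfected
  susceptible_iff : ∀ u, ∀ τ ≤ t, ¬ (X u τ).IsInfected →
    (X u τ = .susceptible ↔ ∃ w, G.Adj u w ∧ (X w τ).IsInfected)
  infected_stays : ∀ u, ∀ τ, τ < t → X u τ = .infected → X u (τ + 1) = .infected
  explicit_stays : ∀ u, ∀ τ, τ < t → X u τ = .explicitN → X u (τ + 1) = .explicitN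
  infect_from_susceptible : ∀ u, ∀ τ, τ < t → (X u (τ + 1)).IsInfected →
    (X u τ).IsInfected ∨ X u τ = .susceptible

/-- An infection path `X^t` is consistent with the observed explicit set `Ve` if the nodes
explicit at time `t` are exactly those of `Ve`. -/
def ConsistentWith (Ve : Set V) (t : ℕ) (X : V → ℕ → NodeState) : Prop :=
  ∀ u, X u t = .explicitN ↔ u ∈ Ve

/-- The set `𝒳_v` of infection paths with source `v` and elapsed time `t` consistent with `Ve`. -/
def pathsFor (G : SimpleGraph V) (Ve : Set V) (v : V) (t : ℕ) : Set (V → ℕ → NodeState) :=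
  {X | IsInfectionPath G v t X ∧ ConsistentWith Ve t X}

/-- The set `𝒯_v` of feasible elapsed times for source `v`. -/
def feasibleTimes (G : SimpleGraph V) (Ve : Set V) (v : V) : Set ℕ :=
  {t | (pathsFor G Ve v t).Nonempty}

/-- `X` is a most likely infection path for `(v, t)`: it is a consistent infection path and
maximizes `P_v` over `𝒳_v` at elapsed time `t`. -/
def IsMostLikely (G : SimpleGraph V) (p : ℝ) (q : V → ℝ) (Ve : Set V) (v : V) (t : ℕ)
    (X : V → ℕ → NodeState) : Prop :=
  X ∈ pathsFor G Ve v t ∧ ∀ Y ∈ pathsFor G Ve v t, pathProb p q v t Y ≤ pathProb p q v t X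

/-- `d̄(v, A) = max_{u ∈ A} d(v, u)`. -/
noncomputable def dbar (G : SimpleGraph V) (v : V) (A : Set V) : ℕ :=
  sSup (G.dist v '' A)

/-- Vertex set of the subtree `T_u(v;G)` rooted at `u` with the first edge of the path from
`u` to `v` removed: in a tree these are the vertices `w` whose path from `v` passes through `u`. -/
def subtreeAway (G : SimpleGraph V) (u v : V) : Set V :=
  {w | G.dist v w = G.dist v u + G.dist u w}

/-- Vertex set of the minimal connected subtree of the tree `G` spanning `S`: the vertices
lying on a path between two vertices of `S`. -/
def spanVerts (G : SimpleGraph V) (S : Set V) : Set V :=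
  {w | ∃ a ∈ S, ∃ b ∈ S, G.dist a b = G.dist a w + G.dist w b}

/-- The first infection time of node `u` in the infection path `X`. -/
noncomputable def firstInfection (X : V → ℕ → NodeState) (u : V) : ℕ :=
  sInf {τ | (X u τ).IsInfected}

/-- The latest infection path for `(v, t)`: a consistent infection path in which every node
outside the minimal connected subtree `H` spanning `Ve ∪ {v}` remains uninfected for all
`τ ≤ t`, and every `u ∈ H \ {v}` first becomes infected at time `t - d̄(u, T_u(v;H))`. -/
def IsLatestPath (G : SimpleGraph V) (Ve : Set V) (v : V) (t : ℕ)
    (X : V → ℕ → NodeState) : Prop :=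
  IsInfectionPath G v t X ∧ ConsistentWith Ve t X ∧
  (∀ u, u ∉ spanVerts G (Ve ∪ {v}) → ∀ τ ≤ t, ¬ (X u τ).IsInfected) ∧
  (∀ u ∈ spanVerts G (Ve ∪ {v}), u ≠ v →
    firstInfection X u = t - dbar G u (subtreeAway G u v ∩ spanVerts G (Ve ∪ {v})))

end SILimited

namespace SimpleGraph

variable {V : Type*} {G : SimpleGraph V}

lemma Walk.dist_eq_add_of_length_eq_dist {a b u : V} (p : G.Walk a b)
    (hp : p.length = G.dist a b) (hu : u ∈ p.support) :
    G.dist a b = G.dist a u + G.dist u b := by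
  have hsplit : (p.takeUntil u hu).length + (p.dropUntil u hu).length = p.length := by
    rw [← Walk.length_append, p.take_spec hu]
  have htake := dist_le (p.takeUntil u hu)
  have hdrop := dist_le (p.dropUntil u hu)
  have htri := (p.takeUntil u hu).reachable.dist_triangle_left b
  omega

/-- The bypass of any walk from `a` to `b` is the unique path, which is the union of geodesics
`a → u → b`. -/
lemma IsTree.mem_support_of_dist_eq_add (hG : G.IsTree) {a b u : V}
    (h : G.dist a b = G.dist a u + G.dist u b) (p : G.Walk a b) : u ∈ p.support := by
  obtain ⟨q₁, -, hq₁⟩ := hG.connected.exists_path_of_dist a u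
  obtain ⟨q₂, -, hq₂⟩ := hG.connected.exists_path_of_dist u b
  have hlen : (q₁.append q₂).length = G.dist a b := by
    rw [Walk.length_append, hq₁, hq₂, h]
  have hq : q₁.append q₂ = p.bypass := congrArg Subtype.val <|
    (hG.isAcyclic.subsingleton_path a b).elim
      ⟨_, (q₁.append q₂).isPath_of_length_eq_dist hlen⟩ ⟨_, p.bypass_isPath⟩
  apply p.support_bypass_subset_support
  rw [← hq, Walk.mem_support_append_iff]
  exact Or.inl q₁.end_mem_support

end SimpleGraph

namespace SILimited

open SimpleGraph

variable {V : Type*} {G : SimpleGraph V}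

lemma mem_subtreeAway_of_adj (hG : G.IsTree) {u v w w' : V}
    (hw : w ∈ subtreeAway G u v) (hwu : w ≠ u) (hadj : G.Adj w w') :
    w' ∈ subtreeAway G u v := by
  obtain ⟨p, -, hp⟩ := hG.connected.exists_path_of_dist v w'
  have hu := hG.mem_support_of_dist_eq_add hw (p.concat hadj.symm)
  rw [Walk.support_concat, List.mem_append, List.mem_singleton] at hu
  exact p.dist_eq_add_of_length_eq_dist hp (hu.resolve_right hwu.symm)

lemma exists_mem_subtreeAway_of_mem_spanVerts (hG : G.IsTree) {S : Set V} {x : V}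
    (hx : x ∈ spanVerts G S) (z : V) : ∃ a ∈ S, a ∈ subtreeAway G x z := by
  obtain ⟨a, ha, b, hb, hab⟩ := hx
  obtain ⟨pa, -, hpa⟩ := hG.connected.exists_path_of_dist z a
  obtain ⟨pb, -, hpb⟩ := hG.connected.exists_path_of_dist z b
  have hmem := hG.mem_support_of_dist_eq_add hab (pa.reverse.append pb)
  rw [Walk.mem_support_append_iff, Walk.support_reverse, List.mem_reverse] at hmem
  rcases hmem with hxa | hxb
  · exact ⟨a, ha, pa.dist_eq_add_of_length_eq_dist hpa hxa⟩
  · exact ⟨b, hb, pb.dist_eq_add_of_length_eq_dist hpb hxb⟩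

lemma NodeState.isInfected_iff (s : NodeState) :
    s.IsInfected ↔ s = .infected ∨ s = .explicitN := by
  cases s <;> simp [NodeState.IsInfected]

lemma dbar_le {u : V} {A : Set V} {n : ℕ} (h : ∀ x ∈ A, G.dist u x ≤ n) : dbar G u A ≤ n :=
  csSup_le' <| by
    rintro _ ⟨x, hx, rfl⟩
    exact h x hx

lemma firstInfection_le {X : V → ℕ → NodeState} {u : V} {τ : ℕ} (h : (X u τ).IsInfected) :
    firstInfection X u ≤ τ :=
  Nat.sInf_le h

lemma isInfected_firstInfection {X : V → ℕ → NodeState} {u : V} {τ : ℕ}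
    (h : (X u τ).IsInfected) : (X u (firstInfection X u)).IsInfected :=
  Nat.sInf_mem (s := {τ | (X u τ).IsInfected}) ⟨τ, h⟩

namespace IsInfectionPath

variable {v : V} {t : ℕ} {X : V → ℕ → NodeState}

lemma isInfected_mono (hX : IsInfectionPath G v t X) {u : V} {σ σ' : ℕ}
    (hσ : σ ≤ σ') (hσ' : σ' ≤ t) (h : (X u σ).IsInfected) : (X u σ').IsInfected := by
  induction σ', hσ using Nat.le_induction with
  | base => exact h
  | succ τ _ ih =>
    rcases (NodeState.isInfected_iff _).mp (ih (by omega)) with hi | hi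
    · rw [hX.infected_stays u τ hσ' hi]; trivial
    · rw [hX.explicit_stays u τ hσ' hi]; trivial

lemma isInfected_or_exists_adj (hX : IsInfectionPath G v t X) {w : V} {τ : ℕ} (hτ : τ < t)
    (h : (X w (τ + 1)).IsInfected) :
    (X w τ).IsInfected ∨ ∃ w', G.Adj w w' ∧ (X w' τ).IsInfected := by
  refine (hX.infect_from_susceptible w τ hτ h).imp_right fun hs => ?_
  have hni : ¬ (X w τ).IsInfected := by rw [hs]; exact id
  exact (hX.susceptible_iff w τ hτ.le hni).mp hs

lemma dist_le_and_isInfected_of_mem_subtreeAway (hG : G.IsTree) (hX : IsInfectionPath G v t X)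
    {τ : ℕ} (hτ : τ ≤ t) {u w : V} (hw : (X w τ).IsInfected) (hwu : w ∈ subtreeAway G u v) :
    G.dist u w ≤ τ ∧ (X u (τ - G.dist u w)).IsInfected := by
  induction τ generalizing w with
  | zero =>
    obtain rfl : w = v := by_contra fun hne => hX.init_uninfected w hne hw
    have hdist : G.dist u w = 0 := by
      simp only [subtreeAway, Set.mem_ofPred_eq, dist_self] at hwu
      omega
    obtain rfl := hG.connected.dist_eq_zero_iff.mp hdist
    simpa [hdist] using hw
  | succ τ ih =>
    by_cases huw : w = u
    · subst huw
      simpa using hw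
    rcases hX.isInfected_or_exists_adj hτ hw with hw | ⟨w', hadj, hw'⟩
    · obtain ⟨hd, hu⟩ := ih (by omega) hw hwu
      exact ⟨by omega, hX.isInfected_mono (by omega) (by omega) hu⟩
    · obtain ⟨hd, hu⟩ := ih (by omega) hw' (mem_subtreeAway_of_adj hG hwu huw hadj)
      have htri : G.dist u w ≤ G.dist u w' + 1 := by
        simpa [dist_eq_one_iff_adj.mpr hadj.symm] using hadj.symm.reachable.dist_triangle_right u
      exact ⟨by omega, hX.isInfected_mono (by omega) (by omega) hu⟩

lemma isInfected_of_mem_spanVerts (hG : G.IsTree) (hX : IsInfectionPath G v t X) {Ve : Set V}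
    (hcons : ConsistentWith Ve t X) {x : V} (hx : x ∈ spanVerts G (Ve ∪ {v})) :
    (X x t).IsInfected := by
  obtain ⟨a, ha, hxa⟩ := exists_mem_subtreeAway_of_mem_spanVerts hG hx v
  have hainf : (X a t).IsInfected := by
    rcases ha with ha | rfl
    · exact (NodeState.isInfected_iff _).mpr (Or.inr ((hcons a).mpr ha))
    · exact hX.isInfected_mono (Nat.zero_le t) le_rfl hX.source_infected
  exact hX.isInfected_mono (Nat.sub_le _ _) le_rfl
    (hX.dist_le_and_isInfected_of_mem_subtreeAway hG le_rfl hainf hxa).2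

lemma dist_source_le_firstInfection (hG : G.IsTree) (hX : IsInfectionPath G v t X) {u : V}
    (hu : (X u t).IsInfected) : G.dist v u ≤ firstInfection X u := by
  have hv : u ∈ subtreeAway G v v := by simp [subtreeAway]
  exact (hX.dist_le_and_isInfected_of_mem_subtreeAway hG (firstInfection_le hu)
    (isInfected_firstInfection hu) hv).1

lemma firstInfection_add_dist_le (hG : G.IsTree) (hX : IsInfectionPath G v t X) {u w : V}
    (hwu : w ∈ subtreeAway G u v) (hw : (X w t).IsInfected) :
    firstInfection X u + G.dist u w ≤ t := by
  obtain ⟨hd, hu⟩ := hX.dist_le_and_isInfected_of_mem_subtreeAway hG le_rfl hw hwu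
  have := firstInfection_le hu
  omega

end IsInfectionPath

end SILimited

open SILimited

theorem first_infection_time_bounds_general
    {V : Type*} (G : SimpleGraph V) (hT : G.IsTree)
    (Ve : Set V)
    (v : V) (t : ℕ)
    (u : V) (huH : u ∈ spanVerts G (Ve ∪ {v}))
    (X : V → ℕ → NodeState) (hX : X ∈ pathsFor G Ve v t) :
    G.dist v u ≤ firstInfection X u ∧
      firstInfection X u ≤ t - dbar G u (subtreeAway G u v ∩ spanVerts G (Ve ∪ {v})) := by
  obtain ⟨hpath, hcons⟩ := hX
  have hu := hpath.isInfected_of_mem_spanVerts hT hcons huH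
  refine ⟨hpath.dist_source_le_firstInfection hT hu, ?_⟩
  have hdbar : dbar G u (subtreeAway G u v ∩ spanVerts G (Ve ∪ {v})) ≤ t - firstInfection X u :=
    dbar_le fun x hx => by
      have := hpath.firstInfection_add_dist_le hT hx.1
        (hpath.isInfected_of_mem_spanVerts hT hcons hx.2)
      omega
  have := firstInfection_le hu
  omega

/-- If `G` is a tree with source `v`, `H` the minimal connected subtree spanning
`Ve ∪ {v}`, and `t ∈ 𝒯_v` the elapsed time, then for any `u ∈ H \ {v}`, the first infection
time of `u` in any consistent infection path satisfies
`d(v,u) ≤ t_u ≤ t - d̄(u, T_u(v;H))`. -/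
theorem first_infection_time_bounds
    {V : Type*} [Infinite V] (G : SimpleGraph V) (hT : G.IsTree)
    (hloc : ∀ u : V, (G.neighborSet u).Finite)
    (hdeg : ∀ u : V, 2 ≤ (G.neighborSet u).ncard)
    (p : ℝ) (hp0 : 0 < p) (hp1 : p < 1)
    (q : V → ℝ) (hq0 : ∀ u, max 0 (2 - 1 / p) ≤ q u) (hq1 : ∀ u, q u ≤ 1)
    (Ve : Set V) (hVene : Ve.Nonempty) (hVefin : Ve.Finite)
    (v : V) (t : ℕ) (ht : t ∈ feasibleTimes G Ve v)
    (u : V) (huH : u ∈ spanVerts G (Ve ∪ {v})) (huv : u ≠ v)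
    (X : V → ℕ → NodeState) (hX : X ∈ pathsFor G Ve v t) :
    G.dist v u ≤ firstInfection X u ∧
      firstInfection X u ≤ t - dbar G u (subtreeAway G u v ∩ spanVerts G (Ve ∪ {v})) :=
  first_infection_time_bounds_general G hT Ve v t u huH X hX
end

section
/- Let H be a finite tree and V_e a nonempty subset of its vertices such that H is the minimal connected subtree spanning V_e. Suppose u and v are neighboring nodes in H with d̄(v, V_e) < d̄(u, V_e). Then d̄(v, V_e) = d̄(u, V_e) − 1, and there exists a node l ∈ V_e lying in the subtree T_v(u;H) such that d(v,l) = d̄(v, V_e). -/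
/-!
Take `l ∈ Ve` farthest from `u`. Since `u` and `v` are adjacent,
`d(u, l) ≤ d(v, l) + 1 ≤ d̄(v, Ve) + 1 ≤ d̄(u, Ve) = d(u, l)`, so every inequality in this chain is
an equality.
-/

namespace Finset

theorem sup_eq_sup_sub_one_of_le_add_one {ι : Type*} {s : Finset ι} (hs : s.Nonempty)
    {f g : ι → ℕ} (hfg : ∀ i ∈ s, f i ≤ g i + 1) (hlt : s.sup g < s.sup f) :
    s.sup g = s.sup f - 1 ∧ ∃ i ∈ s, f i = g i + 1 ∧ g i = s.sup g := by
  obtain ⟨i, hi, hfi⟩ := s.exists_mem_eq_sup hs f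
  have hgi : g i ≤ s.sup g := le_sup hi
  have := hfg i hi
  exact ⟨by omega, i, hi, by omega, by omega⟩

end Finset

namespace SimpleGraph

theorem Adj.dist_le_dist_add_one {V : Type*} {G : SimpleGraph V} {u v : V} (hadj : G.Adj u v)
    (x : V) : G.dist u x ≤ G.dist v x + 1 := by
  rw [dist_comm, dist_comm (u := v)]
  rcases hadj.symm.diff_dist_adj (u := x) with h | h | h <;> omega

end SimpleGraph

theorem infection_range_of_neighbor_pred_general
    {V : Type*} (H : SimpleGraph V)
    (Ve : Finset V) (hVe : Ve.Nonempty)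
    (u v : V) (hadj : H.Adj u v)
    (hlt : Ve.sup (H.dist v) < Ve.sup (H.dist u)) :
    Ve.sup (H.dist v) = Ve.sup (H.dist u) - 1 ∧
      ∃ l ∈ Ve, H.dist u l = H.dist v l + 1 ∧ H.dist v l = Ve.sup (H.dist v) :=
  Finset.sup_eq_sup_sub_one_of_le_add_one hVe (fun l _ => hadj.dist_le_dist_add_one l) hlt

/-- Let `H` be a finite tree and `Ve` a nonempty subset of its vertices such that
`H` is the minimal connected subtree spanning `Ve` (equivalently, every leaf of `H` is in `Ve`).
If `u` and `v` are neighboring nodes of `H` with `d̄(v,Ve) < d̄(u,Ve)`, then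
`d̄(v,Ve) = d̄(u,Ve) − 1`, and there exists `l ∈ Ve` in the subtree `T_v(u;H)` (i.e., with
`d(u,l) = d(v,l) + 1`) such that `d(v,l) = d̄(v,Ve)`. -/
theorem infection_range_of_neighbor_pred
    {V : Type*} [Fintype V] (H : SimpleGraph V) (hT : H.IsTree)
    (Ve : Finset V) (hVe : Ve.Nonempty)
    (hmin : ∀ w : V, (H.neighborSet w).ncard ≤ 1 → w ∈ Ve)
    (u v : V) (hadj : H.Adj u v)
    (hlt : Ve.sup (H.dist v) < Ve.sup (H.dist u)) :
    Ve.sup (H.dist v) = Ve.sup (H.dist u) - 1 ∧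
      ∃ l ∈ Ve, H.dist u l = H.dist v l + 1 ∧ H.dist v l = Ve.sup (H.dist v) :=
  infection_range_of_neighbor_pred_general H Ve hVe u v hadj hlt
end

section
/- Let H be a finite tree with more than 2 vertices that is the minimal connected subtree spanning a nonempty vertex set V_e. A vertex v of H is a Jordan center of V_e if and only if (i) v has degree at least 2 in H, and (ii) letting, for each neighbor u of v in H, ℓ_u = 1 + max_{x ∈ T_u(v;H)} d(u,x) be the maximum length of a path in H whose first edge is (v,u), the difference between the largest and the second largest values among {ℓ_u : u a neighbor of v in H} is at most 1. -/
/-!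
In a tree, a path joining two different branches `T_u(v)`, `T_u'(v)` at `v` passes through `v`.
Hence the eccentricity of `v` is `max_u ℓ_u`, every vertex `x ≠ v` in the branch of `u` has
eccentricity at least `d(x, v) + ℓ_u'` for each neighbour `u' ≠ u`, and the eccentricity of a
neighbour `u` is at most `max (ℓ_u - 1) (1 + max_{u' ≠ u} ℓ_u')`. Comparing `v` with its neighbour
`u₀` of largest `ℓ` gives both directions of the balance condition; a leaf `v` would force every
vertex to lie within distance one of `v`, impossible when `|H| > 2`. Finally, a vertex farthest
from any given vertex is a leaf, so eccentricities relative to `V_e` are the ordinary ones.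
-/

/-- `ℓ_u`: one plus the maximum distance from `u` to a vertex of the subtree `T_u(v;H)` of the
tree `H` rooted at `u` obtained by removing the edge between `u` and `v` (its vertices are the
`x` with `d(v,x) = d(u,x) + 1`); this is the maximum length of a path in `H` whose first edge
is `(v,u)`. -/
noncomputable def pathLenFrom {V : Type*} [Fintype V] (H : SimpleGraph V) (v u : V) : ℕ :=
  1 + (Finset.univ.filter (fun x : V => H.dist v x = H.dist u x + 1)).sup (H.dist u)

open SimpleGraph Finset

namespace SimpleGraph

variable {V : Type*} {G : SimpleGraph V}

lemma Connected.exists_adj_dist_eq_add_one (hG : G.Connected) {v x : V} (hx : x ≠ v) :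
    ∃ u, G.Adj v u ∧ G.dist v x = G.dist u x + 1 := by
  obtain ⟨p, -, hp⟩ := hG.exists_path_of_dist v x
  have hnil : ¬ p.Nil := fun h => hx (h.eq).symm
  refine ⟨p.snd, p.adj_snd hnil, le_antisymm ?_ ?_⟩
  · calc G.dist v x ≤ G.dist v p.snd + G.dist p.snd x := hG.dist_triangle
      _ = G.dist p.snd x + 1 := by rw [dist_eq_one_iff_adj.mpr (p.adj_snd hnil), add_comm]
  · have := dist_le p.tail
    have := p.length_tail_add_one hnil
    omega

lemma Walk.eq_mk_start_snd_of_mem_head?_edges {v w : V} (p : G.Walk v w) :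
    ∀ e ∈ p.edges.head?, e = s(v, p.snd) := by
  cases p <;> simp

lemma IsAcyclic.isPath_reverse_append (hG : G.IsAcyclic) {v x y : V} {q : G.Walk v x}
    {r : G.Walk v y} (hq : q.IsPath) (hr : r.IsPath) (hqr : q.snd ≠ r.snd) :
    (q.reverse.append r).IsPath := by
  rw [hG.isPath_iff_isChain, Walk.edges_append, Walk.edges_reverse]
  refine List.IsChain.append ?_ ((hG.isPath_iff_isChain r).mp hr) ?_
  · rw [List.isChain_reverse]
    exact ((hG.isPath_iff_isChain q).mp hq).imp fun _ _ h => h.symm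
  · intro e he f hf
    rw [List.getLast?_reverse] at he
    rw [q.eq_mk_start_snd_of_mem_head?_edges e he,
      r.eq_mk_start_snd_of_mem_head?_edges f hf]
    exact fun h => hqr (Sym2.congr_right.mp h)

lemma IsTree.length_eq_dist (hG : G.IsTree) {u v : V} {p : G.Walk u v} (hp : p.IsPath) :
    p.length = G.dist u v := by
  obtain ⟨q, hq, hql⟩ := hG.connected.exists_path_of_dist u v
  rw [(hG.existsUnique_path u v).unique hp hq, hql]

lemma IsTree.snd_eq_of_dist_eq_add_one (hG : G.IsTree) {v u x : V} (hvu : G.Adj v u)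
    (hx : G.dist v x = G.dist u x + 1) {p : G.Walk v x} (hp : p.IsPath) : p.snd = u := by
  obtain ⟨q, -, hq⟩ := hG.connected.exists_path_of_dist u x
  have hcons : (Walk.cons hvu q).IsPath :=
    (Walk.cons hvu q).isPath_of_length_eq_dist (by rw [Walk.length_cons, hq, hx])
  rw [(hG.existsUnique_path v x).unique hp hcons, Walk.snd_cons]

lemma IsTree.eq_of_dist_eq_add_one (hG : G.IsTree) {v u u' x : V} (hu : G.Adj v u)
    (hu' : G.Adj v u') (hx : G.dist v x = G.dist u x + 1) (hx' : G.dist v x = G.dist u' x + 1) :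
    u = u' := by
  obtain ⟨p, hp, -⟩ := hG.connected.exists_path_of_dist v x
  rw [← hG.snd_eq_of_dist_eq_add_one hu hx hp, hG.snd_eq_of_dist_eq_add_one hu' hx' hp]

lemma IsTree.dist_eq_dist_add_dist_of_ne (hG : G.IsTree) {v u u' x y : V} (hu : G.Adj v u)
    (hu' : G.Adj v u') (huu' : u ≠ u') (hx : G.dist v x = G.dist u x + 1)
    (hy : G.dist v y = G.dist u' y + 1) : G.dist x y = G.dist x v + G.dist v y := by
  obtain ⟨q, hq, hql⟩ := hG.connected.exists_path_of_dist v x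
  obtain ⟨r, hr, hrl⟩ := hG.connected.exists_path_of_dist v y
  have hqr : q.snd ≠ r.snd := by
    rwa [hG.snd_eq_of_dist_eq_add_one hu hx hq, hG.snd_eq_of_dist_eq_add_one hu' hy hr]
  rw [← hG.length_eq_dist (hG.isAcyclic.isPath_reverse_append hq hr hqr), Walk.length_append,
    Walk.length_reverse, hql, hrl, dist_comm]

section Finite

variable [Fintype V]

lemma Connected.card_le_one_add_degree [DecidableRel G.Adj] (hG : G.Connected) {v : V}
    (h : univ.sup (G.dist v) ≤ 1) : Fintype.card V ≤ 1 + G.degree v := by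
  classical
  have hsub : (univ : Finset V) ⊆ insert v (G.neighborFinset v) := by
    intro x _
    rcases eq_or_ne x v with rfl | hxv
    · exact mem_insert_self _ _
    · have hpos := hG.pos_dist_of_ne hxv.symm
      have hle : G.dist v x ≤ 1 := (le_sup (mem_univ x)).trans h
      exact mem_insert_of_mem ((mem_neighborFinset _ _ _).mpr
        (dist_eq_one_iff_adj.mp (by omega)))
  calc Fintype.card V ≤ (insert v (G.neighborFinset v)).card := card_le_card hsub
    _ ≤ 1 + G.degree v := by
      rw [← card_neighborFinset_eq_degree, add_comm]
      exact card_insert_le _ _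

lemma IsTree.degree_le_one_of_forall_dist_le [DecidableRel G.Adj] (hG : G.IsTree) {x y : V}
    (h : ∀ w, G.dist x w ≤ G.dist x y) : G.degree y ≤ 1 := by
  have hbranch : ∀ w, G.Adj y w → G.dist y x = G.dist w x + 1 := fun w hw => by
    rcases hG.dist_eq_dist_add_one_of_adj x hw with h' | h'
    · rwa [dist_comm, dist_comm (u := w)]
    · have := h w; omega
  rw [← card_neighborFinset_eq_degree, card_le_one]
  intro a ha b hb
  rw [mem_neighborFinset] at ha hb
  exact hG.eq_of_dist_eq_add_one ha hb (hbranch a ha) (hbranch b hb)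

lemma IsTree.sup_dist_eq_sup_univ [DecidableRel G.Adj] (hG : G.IsTree) {s : Finset V}
    (hs : ∀ w, G.degree w ≤ 1 → w ∈ s) (x : V) : s.sup (G.dist x) = univ.sup (G.dist x) := by
  refine le_antisymm (sup_mono (subset_univ s)) ?_
  have : Nonempty V := hG.connected.nonempty
  obtain ⟨y, -, hy⟩ := exists_mem_eq_sup univ univ_nonempty (G.dist x)
  rw [hy]
  exact le_sup (hs y (hG.degree_le_one_of_forall_dist_le fun w => hy ▸ le_sup (mem_univ w)))

end Finite

end SimpleGraph

section PathLenFrom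

variable {V : Type*} [Fintype V] {G : SimpleGraph V}

lemma dist_le_pathLenFrom {v u y : V} (hy : G.dist v y = G.dist u y + 1) :
    G.dist v y ≤ pathLenFrom G v u := by
  have : G.dist u y ≤ (univ.filter fun x => G.dist v x = G.dist u x + 1).sup (G.dist u) :=
    le_sup (by simpa using hy)
  rw [pathLenFrom]
  omega

lemma exists_dist_eq_pathLenFrom {v u : V} (hvu : G.Adj v u) :
    ∃ y, G.dist v y = G.dist u y + 1 ∧ pathLenFrom G v u = G.dist v y := by
  have hu : u ∈ univ.filter fun x => G.dist v x = G.dist u x + 1 := by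
    simp [dist_eq_one_iff_adj.mpr hvu]
  obtain ⟨y, hy, hsup⟩ := exists_mem_eq_sup _ ⟨u, hu⟩ (G.dist u)
  have hy : G.dist v y = G.dist u y + 1 := by simpa using hy
  refine ⟨y, hy, ?_⟩
  rw [pathLenFrom, hsup]
  omega

lemma SimpleGraph.Connected.sup_dist_eq_sup_pathLenFrom [DecidableRel G.Adj] (hG : G.Connected)
    (v : V) : univ.sup (G.dist v) = (G.neighborFinset v).sup (pathLenFrom G v) := by
  refine le_antisymm (Finset.sup_le fun y _ => ?_) (Finset.sup_le fun u hu => ?_)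
  · rcases eq_or_ne y v with rfl | hyv
    · simp
    obtain ⟨u, hvu, hy⟩ := hG.exists_adj_dist_eq_add_one hyv
    exact (dist_le_pathLenFrom hy).trans (le_sup ((mem_neighborFinset _ _ _).mpr hvu))
  · obtain ⟨y, -, hy⟩ := exists_dist_eq_pathLenFrom ((mem_neighborFinset _ _ _).mp hu)
    exact hy ▸ le_sup (mem_univ y)

lemma SimpleGraph.IsTree.dist_add_pathLenFrom_le_sup_dist (hG : G.IsTree) {v u u' x : V}
    (hu : G.Adj v u) (hu' : G.Adj v u') (huu' : u ≠ u') (hx : G.dist v x = G.dist u x + 1) :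
    G.dist x v + pathLenFrom G v u' ≤ univ.sup (G.dist x) := by
  obtain ⟨y, hy, hℓ⟩ := exists_dist_eq_pathLenFrom hu'
  rw [hℓ, ← hG.dist_eq_dist_add_dist_of_ne hu hu' huu' hx hy]
  exact le_sup (mem_univ y)

lemma SimpleGraph.IsTree.sup_dist_add_one_le_max [DecidableEq V] [DecidableRel G.Adj]
    (hG : G.IsTree) {v u : V} (hu : G.Adj v u) :
    univ.sup (G.dist u) + 1 ≤
      max (pathLenFrom G v u) (((G.neighborFinset v).erase u).sup (pathLenFrom G v) + 2) := by
  have : Nonempty V := ⟨v⟩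
  obtain ⟨y, -, hsup⟩ := exists_mem_eq_sup univ univ_nonempty (G.dist u)
  rw [hsup]
  rcases hG.dist_eq_dist_add_one_of_adj y hu with hy | hy
  · rw [dist_comm, dist_comm (u := y)] at hy
    have := dist_le_pathLenFrom hy
    omega
  rcases eq_or_ne y v with rfl | hyv
  · rw [dist_comm, dist_eq_one_iff_adj.mpr hu]
    omega
  obtain ⟨u', hu', hy'⟩ := hG.connected.exists_adj_dist_eq_add_one hyv
  have hne : u' ≠ u := by rintro rfl; rw [dist_comm, dist_comm (u := y)] at hy; omega
  have := (dist_le_pathLenFrom hy').trans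
    (le_sup (mem_erase.mpr ⟨hne, (mem_neighborFinset _ _ _).mpr hu'⟩))
  rw [dist_comm, dist_comm (u := y)] at hy
  omega

end PathLenFrom

lemma Finset.exists_mem_ne_and_le_add_one {α : Type*} [DecidableEq α] {s : Finset α}
    {f : α → ℕ} {a : α} (ha : a ∈ s) (hs : 2 ≤ s.card) (hf : f a ≤ (s.erase a).sup f + 1)
    (b : α) : ∃ c ∈ s, c ≠ b ∧ f a ≤ f c + 1 := by
  rcases eq_or_ne a b with rfl | hab
  · have hne : (s.erase a).Nonempty := by
      rw [← card_pos, card_erase_of_mem ha]; omega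
    obtain ⟨c, hc, hfc⟩ := exists_mem_eq_sup _ hne f
    exact ⟨c, mem_of_mem_erase hc, ne_of_mem_erase hc, hfc ▸ hf⟩
  · exact ⟨a, ha, hab, Nat.le_succ _⟩

theorem Jordan_center_iff_degree_two_and_balanced_general
    {V : Type*} [Fintype V] [DecidableEq V] (H : SimpleGraph V) [DecidableRel H.Adj]
    (hT : H.IsTree) (hcard : 2 < Fintype.card V)
    (Ve : Finset V)
    (hmin : ∀ w : V, H.degree w ≤ 1 → w ∈ Ve)
    (v : V) :
    (∀ x : V, Ve.sup (H.dist v) ≤ Ve.sup (H.dist x)) ↔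
      (2 ≤ H.degree v ∧
        ∃ u₀ ∈ H.neighborFinset v,
          (∀ u ∈ H.neighborFinset v, pathLenFrom H v u ≤ pathLenFrom H v u₀) ∧
          pathLenFrom H v u₀ ≤ ((H.neighborFinset v).erase u₀).sup (pathLenFrom H v) + 1) := by
  simp only [hT.sup_dist_eq_sup_univ hmin]
  have hecc := hT.connected.sup_dist_eq_sup_pathLenFrom v
  constructor
  · intro hcenter
    have : Nontrivial V := Fintype.one_lt_card_iff_nontrivial.mp (by omega)
    obtain ⟨u₀, hu₀, hmax⟩ := exists_mem_eq_sup _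
      (card_pos.mp ((card_neighborFinset_eq_degree H v).symm ▸
        hT.connected.preconnected.degree_pos_of_nontrivial v)) (pathLenFrom H v)
    rw [hmax] at hecc
    have hbal :
        pathLenFrom H v u₀ ≤ ((H.neighborFinset v).erase u₀).sup (pathLenFrom H v) + 1 := by
      have := hT.sup_dist_add_one_le_max ((mem_neighborFinset _ _ _).mp hu₀)
      have := hcenter u₀
      omega
    refine ⟨?_, u₀, hu₀, fun u hu => hmax ▸ le_sup hu, hbal⟩
    by_contra! hdeg
    have herase : (H.neighborFinset v).erase u₀ = ∅ := by
      rw [← card_eq_zero, card_erase_of_mem hu₀, card_neighborFinset_eq_degree]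
      omega
    rw [herase, sup_empty, Nat.bot_eq_zero] at hbal
    have := hT.connected.card_le_one_add_degree (by omega : univ.sup (H.dist v) ≤ 1)
    omega
  · rintro ⟨hdeg, u₀, hu₀, hmax, hbal⟩ x
    have hecc₀ : univ.sup (H.dist v) = pathLenFrom H v u₀ :=
      hecc.trans (le_antisymm (Finset.sup_le hmax) (le_sup hu₀))
    rw [hecc₀]
    rcases eq_or_ne x v with rfl | hxv
    · exact hecc₀.ge
    obtain ⟨u, hu, hx⟩ := hT.connected.exists_adj_dist_eq_add_one hxv
    obtain ⟨u', hu', hne, hle⟩ := exists_mem_ne_and_le_add_one hu₀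
      ((card_neighborFinset_eq_degree H v).symm ▸ hdeg) hbal u
    have := hT.dist_add_pathLenFrom_le_sup_dist hu ((mem_neighborFinset _ _ _).mp hu') hne.symm hx
    have := hT.connected.pos_dist_of_ne hxv
    omega

/-- Let `H` be a finite tree on more than two vertices that is the minimal
connected subtree spanning a nonempty vertex set `Ve` (equivalently, every leaf of `H` is in
`Ve`). A vertex `v` is a Jordan center of `Ve` if and only if (i) `v` has degree at least 2 in
`H`, and (ii) the difference between the largest and the second largest values among
`{ℓ_u : u a neighbor of v in H}` is at most 1. -/
theorem Jordan_center_iff_degree_two_and_balanced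
    {V : Type*} [Fintype V] [DecidableEq V] (H : SimpleGraph V) [DecidableRel H.Adj]
    (hT : H.IsTree) (hcard : 2 < Fintype.card V)
    (Ve : Finset V) (hVe : Ve.Nonempty)
    (hmin : ∀ w : V, H.degree w ≤ 1 → w ∈ Ve)
    (v : V) :
    (∀ x : V, Ve.sup (H.dist v) ≤ Ve.sup (H.dist x)) ↔
      (2 ≤ H.degree v ∧
        ∃ u₀ ∈ H.neighborFinset v,
          (∀ u ∈ H.neighborFinset v, pathLenFrom H v u ≤ pathLenFrom H v u₀) ∧
          pathLenFrom H v u₀ ≤ ((H.neighborFinset v).erase u₀).sup (pathLenFrom H v) + 1) :=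
  Jordan_center_iff_degree_two_and_balanced_general H hT hcard Ve hmin v
end
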